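/- For real t > -1 and natural number k, ∑_{m=1}^{∞} (-1)^{m-1}·C(t+1, m+k+1) = C(t, k+1), where C denotes the generalized binomial coefficient. -/

import Mathlib

/-!
Pascal's rule `C(t+1, n+1) = C(t, n) + C(t, n+1)` telescopes the partial sums to
`C(t, k+1) - (-1)^M C(t, M+k+1)`, so it suffices that the series converges absolutely and that
`C(t, n) → 0`. Both follow from `(n+1)|C(s, n+1)| = (n - s)|C(s, n)|` for `n ≥ s`, where
`s = t + 1 > 0`: eventually `n|C(s, n)|` decreases by `s|C(s, n)|` at each step, so `∑ |C(s, n)|`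
converges, and the limit `L` of `n|C(s, n)|` vanishes, since otherwise `|C(s, n)| ≥ L/n`.
The absorption identity `(n+1) C(t+1, n+1) = (t+1) C(t, n)` then gives `C(t, n) → 0`.
-/

/-- Generalized binomial coefficient C(t, m) = t(t-1)⋯(t-m+1)/m!. -/
noncomputable def rchoose (t : ℝ) (m : ℕ) : ℝ :=
  (∏ i ∈ Finset.range m, (t - i)) / m.factorial

open Filter Finset Topology

lemma rchoose_succ (t : ℝ) (n : ℕ) :
    rchoose t (n + 1) = rchoose t n * (t - n) / (n + 1) := by
  unfold rchoose
  rw [prod_range_succ, Nat.factorial_succ]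
  push_cast
  field_simp

lemma succ_mul_rchoose_add_one_succ (t : ℝ) (n : ℕ) :
    (n + 1) * rchoose (t + 1) (n + 1) = (t + 1) * rchoose t n := by
  unfold rchoose
  rw [prod_range_succ', Nat.factorial_succ]
  push_cast
  simp only [add_sub_add_right_eq_sub, sub_zero]
  field_simp

lemma rchoose_add_one_succ (t : ℝ) (n : ℕ) :
    rchoose (t + 1) (n + 1) = rchoose t n + rchoose t (n + 1) := by
  have h := succ_mul_rchoose_add_one_succ t n
  rw [rchoose_succ t n]
  field_simp
  linarith

lemma succ_mul_abs_rchoose_succ {t : ℝ} {n : ℕ} (h : t ≤ n) :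
    (n + 1) * |rchoose t (n + 1)| = n * |rchoose t n| - t * |rchoose t n| := by
  rw [rchoose_succ, abs_div, abs_mul, abs_sub_comm, abs_of_nonneg (sub_nonneg.2 h),
    abs_of_pos (by positivity : (0 : ℝ) < n + 1)]
  field_simp

lemma mul_sum_abs_rchoose {t : ℝ} {N : ℕ} (hN : t ≤ N) (n : ℕ) :
    t * ∑ i ∈ range n, |rchoose t (i + N)| =
      N * |rchoose t N| - ((n + N : ℕ) : ℝ) * |rchoose t (n + N)| := by
  let f (i : ℕ) : ℝ := ((i + N : ℕ) : ℝ) * |rchoose t (i + N)|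
  have step (i : ℕ) : t * |rchoose t (i + N)| = f i - f (i + 1) := by
    have := succ_mul_abs_rchoose_succ (hN.trans (by exact_mod_cast Nat.le_add_left N i))
    simp only [f, Nat.add_right_comm i 1 N]
    push_cast at this ⊢
    linarith
  rw [mul_sum, sum_congr rfl fun i _ => step i, sum_range_sub']
  simp [f]

lemma summable_abs_rchoose {s : ℝ} (hs : 0 < s) : Summable fun n => |rchoose s n| := by
  obtain ⟨N, hN⟩ := exists_nat_ge s
  refine (summable_nat_add_iff N).1 (summable_of_sum_range_le (c := N * |rchoose s N| / s)
    (fun _ => abs_nonneg _) fun n => ?_)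
  rw [le_div_iff₀ hs, mul_comm, mul_sum_abs_rchoose hN]
  have : 0 ≤ ((n + N : ℕ) : ℝ) * |rchoose s (n + N)| := by positivity
  linarith

lemma tendsto_natCast_mul_abs_rchoose {s : ℝ} (hs : 0 < s) :
    Tendsto (fun n : ℕ => (n : ℝ) * |rchoose s n|) atTop (𝓝 0) := by
  obtain ⟨N, hN⟩ := exists_nat_ge s
  set b : ℕ → ℝ := fun n => ((n + N : ℕ) : ℝ) * |rchoose s (n + N)|
  have hb_eq (n : ℕ) : b n = N * |rchoose s N| - s * ∑ i ∈ range n, |rchoose s (i + N)| := by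
    rw [mul_sum_abs_rchoose hN, sub_sub_cancel]
  have hanti : Antitone b := antitone_nat_of_succ_le fun n => by
    rw [hb_eq, hb_eq, sum_range_succ]
    nlinarith [abs_nonneg (rchoose s (n + N))]
  have hb_nonneg (n : ℕ) : 0 ≤ b n := by positivity
  have hbdd : BddBelow (Set.range b) := ⟨0, Set.forall_mem_range.2 hb_nonneg⟩
  have hL : ⨅ n, b n = 0 := by
    by_contra hL
    have hLpos : 0 < ⨅ n, b n := (le_ciInf hb_nonneg).lt_of_ne (Ne.symm hL)
    apply Real.not_summable_one_div_natCast
    have htail := ((summable_nat_add_iff N).2 (summable_abs_rchoose hs)).div_const (⨅ n, b n)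
    refine (summable_nat_add_iff N).1 (htail.of_nonneg_of_le (fun n => by positivity) fun n => ?_)
    have hpos : (0 : ℝ) < ((n + N : ℕ) : ℝ) := by
      push_cast; linarith [(n.cast_nonneg : (0 : ℝ) ≤ n)]
    rw [div_le_div_iff₀ hpos hLpos, one_mul, mul_comm]
    exact ciInf_le hbdd n
  rw [← tendsto_add_atTop_iff_nat N, ← hL]
  exact tendsto_atTop_ciInf hanti hbdd

lemma tendsto_rchoose_atTop {t : ℝ} (ht : -1 < t) : Tendsto (rchoose t) atTop (𝓝 0) := by
  have hs : 0 < t + 1 := by linarith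
  have h := ((tendsto_add_atTop_iff_nat 1).2 (tendsto_natCast_mul_abs_rchoose hs)).div_const (t + 1)
  rw [zero_div] at h
  refine squeeze_zero_norm (fun n => le_of_eq ?_) h
  rw [Real.norm_eq_abs, eq_div_iff hs.ne', Nat.cast_succ]
  have := congrArg abs (succ_mul_rchoose_add_one_succ t n)
  rwa [abs_mul, abs_mul, abs_of_pos hs, abs_of_pos (by positivity : (0 : ℝ) < n + 1),
    mul_comm (t + 1), eq_comm] at this

lemma sum_range_neg_one_pow_mul_rchoose (t : ℝ) (n M : ℕ) :
    ∑ m ∈ range M, (-1 : ℝ) ^ m * rchoose (t + 1) (m + n + 1) =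
      rchoose t n - (-1) ^ M * rchoose t (M + n) := by
  induction M with
  | zero => simp
  | succ M ih =>
    rw [sum_range_succ, ih, rchoose_add_one_succ, pow_succ, Nat.add_right_comm M 1 n]
    ring

theorem alternating_binomial_tail_sum (t : ℝ) (ht : -1 < t) (k : ℕ) :
    ∑' m : ℕ, (-1:ℝ) ^ m * rchoose (t + 1) ((m + 1) + k + 1) = rchoose t (k + 1) := by
  have hindex (m : ℕ) : m + 1 + k + 1 = m + (k + 1) + 1 := by omega
  simp only [hindex]
  have hsum : Summable fun m : ℕ => (-1 : ℝ) ^ m * rchoose (t + 1) (m + (k + 1) + 1) :=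
    .of_norm <| by
      simpa [norm_mul, add_assoc] using
        (summable_nat_add_iff (k + 2)).2 (summable_abs_rchoose (by linarith : 0 < t + 1))
  refine (hsum.hasSum_iff_tendsto_nat.2 ?_).tsum_eq
  simp only [sum_range_neg_one_pow_mul_rchoose]
  have htail := ((tendsto_add_atTop_iff_nat (k + 1)).2 (tendsto_rchoose_atTop ht)).norm
  rw [norm_zero] at htail
  have hsign : Tendsto (fun M : ℕ => (-1 : ℝ) ^ M * rchoose t (M + (k + 1))) atTop (𝓝 0) :=
    squeeze_zero_norm (fun M => by simp [norm_mul]) htail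
  simpa using tendsto_const_nhds.sub hsign
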